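/- Consider the parabolic level set q(x, y) = y − φ + (κ/2)x² on the unit square c = [−1/2, 1/2]², with the parabola crossing the square as in the previous setting. Let A = 1/2 + φ − κ/24 be the liquid area. Then the first moment of the liquid region is M₁ = (0, κ²/1440 + A(A−1)/2); in particular, the first moment is invariant under the sign change κ ↦ −κ (with φ adjusted via φ = A − 1/2 + κ/24 to preserve the area A). -/

import Mathlib

open MeasureTheory

theorem stmt_12 (φ κ : ℝ)
    (hcross : ∀ x ∈ Set.Icc (-(1:ℝ)/2) (1/2),
      φ - κ / 2 * x ^ 2 ∈ Set.Ioo (-(1:ℝ)/2) (1/2)) :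
    (∫ p in (Set.Icc (-(1:ℝ)/2) (1/2) ×ˢ Set.Icc (-(1:ℝ)/2) (1/2)) ∩
        {p : ℝ × ℝ | p.2 ≤ φ - κ / 2 * p.1 ^ 2}, p) =
      ((0 : ℝ), κ ^ 2 / 1440 + (1/2 + φ - κ/24) * ((1/2 + φ - κ/24) - 1) / 2) := by
  set g : ℝ → ℝ := fun x => φ - κ / 2 * x ^ 2 with hg
  set C : Set (ℝ × ℝ) := {p : ℝ × ℝ | p.2 ≤ φ - κ / 2 * p.1 ^ 2} with hCdef
  set I : Set ℝ := Set.Icc (-(1:ℝ)/2) (1/2) with hI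
  have hC : MeasurableSet C := by
    apply measurableSet_le measurable_snd
    fun_prop
  -- Step 1: move intersection into an indicator
  rw [← setIntegral_indicator hC]
  -- integrability of the indicator on the square
  have hsq : IntegrableOn (fun p : ℝ × ℝ => p) (I ×ˢ I) volume :=
    continuous_id.continuousOn.integrableOn_compact (isCompact_Icc.prod isCompact_Icc)
  have hint : IntegrableOn (C.indicator (fun p : ℝ × ℝ => p)) (I ×ˢ I) volume :=
    hsq.indicator hC
  rw [Measure.volume_eq_prod] at hint ⊢
  rw [setIntegral_prod _ hint]
  -- inner integral
  have hinner : ∀ x ∈ I,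
      (∫ y in I, C.indicator (fun p : ℝ × ℝ => p) (x, y)) =
        ((g x + 1/2) * x, (g x ^ 2 - 1/4) / 2) := by
    intro x hx
    have hgx := hcross x hx
    have e1 : (fun y => C.indicator (fun p : ℝ × ℝ => p) (x, y)) =
        fun y => (Set.Iic (g x)).indicator (fun y => ((x : ℝ), y)) y := by
      funext y
      by_cases h : y ≤ g x
      · simp [Set.indicator_of_mem, h, hCdef, hg, Set.mem_setOf_eq, show y ≤ φ - κ / 2 * x ^ 2 from h]
      · simp [Set.indicator_of_notMem, h, hCdef, hg, Set.mem_setOf_eq, show ¬ y ≤ φ - κ / 2 * x ^ 2 from h]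
    rw [show (∫ y in I, C.indicator (fun p : ℝ × ℝ => p) (x, y)) =
        ∫ y in I, (Set.Iic (g x)).indicator (fun y => ((x : ℝ), y)) y from by rw [e1]]
    rw [setIntegral_indicator measurableSet_Iic]
    have hIinter : I ∩ Set.Iic (g x) = Set.Icc (-(1:ℝ)/2) (g x) := by
      ext y
      simp only [hI, Set.mem_inter_iff, Set.mem_Icc, Set.mem_Iic]
      constructor
      · rintro ⟨⟨h1, _⟩, h3⟩; exact ⟨h1, h3⟩
      · rintro ⟨h1, h2⟩; exact ⟨⟨h1, h2.trans hgx.2.le⟩, h2⟩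
    rw [hIinter]
    have hab : (-(1:ℝ)/2) ≤ g x := hgx.1.le
    have hfi : IntegrableOn (fun _ : ℝ => x) (Set.Icc (-(1:ℝ)/2) (g x)) volume :=
      integrableOn_const measure_Icc_lt_top.ne
    have hgi : IntegrableOn (fun y : ℝ => y) (Set.Icc (-(1:ℝ)/2) (g x)) volume :=
      continuous_id.continuousOn.integrableOn_compact isCompact_Icc
    rw [integral_pair hfi hgi]
    have h1 : (∫ _ in Set.Icc (-(1:ℝ)/2) (g x), x) = (g x + 1/2) * x := by
      rw [setIntegral_const, measureReal_def, Real.volume_Icc,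
        ENNReal.toReal_ofReal (by linarith), smul_eq_mul]
      ring
    have h2 : (∫ y in Set.Icc (-(1:ℝ)/2) (g x), y) = (g x ^ 2 - 1/4) / 2 := by
      rw [integral_Icc_eq_integral_Ioc, ← intervalIntegral.integral_of_le hab]
      rw [integral_id]
      ring
    rw [h1, h2]
  rw [setIntegral_congr_fun measurableSet_Icc hinner]
  -- outer integral
  have hfi : IntegrableOn (fun x : ℝ => (g x + 1/2) * x) I volume :=
    (by fun_prop : Continuous fun x : ℝ => (g x + 1/2) * x).continuousOn.integrableOn_compact
      isCompact_Icc
  have hgi : IntegrableOn (fun x : ℝ => (g x ^ 2 - 1/4) / 2) I volume :=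
    (by fun_prop : Continuous fun x : ℝ => (g x ^ 2 - 1/4) / 2).continuousOn.integrableOn_compact
      isCompact_Icc
  rw [integral_pair hfi hgi]
  have hle : (-(1:ℝ)/2) ≤ 1/2 := by norm_num
  have c1 : (∫ x in I, (g x + 1/2) * x) = 0 := by
    rw [hI, integral_Icc_eq_integral_Ioc, ← intervalIntegral.integral_of_le hle]
    have := intervalIntegral.integral_eq_sub_of_hasDerivAt
      (f := fun x : ℝ => (φ + 1/2)/2 * x ^ 2 - κ/8 * x ^ 4)
      (f' := fun x : ℝ => (g x + 1/2) * x) (a := -(1:ℝ)/2) (b := 1/2)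
      (fun x _ => by
        have h := ((hasDerivAt_pow 2 x).const_mul ((φ + 1/2)/2)).sub
          ((hasDerivAt_pow 4 x).const_mul (κ/8))
        convert h using 1
        rfl
        change (φ - κ / 2 * x ^ 2 + 1/2) * x = _
        norm_num
        ring)
      ((by fun_prop : Continuous fun x : ℝ => (g x + 1/2) * x).intervalIntegrable _ _)
    rw [this]
    ring
  have c2 : (∫ x in I, (g x ^ 2 - 1/4) / 2) =
      κ ^ 2 / 1440 + (1/2 + φ - κ/24) * ((1/2 + φ - κ/24) - 1) / 2 := by
    rw [hI, integral_Icc_eq_integral_Ioc, ← intervalIntegral.integral_of_le hle]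
    have := intervalIntegral.integral_eq_sub_of_hasDerivAt
      (f := fun x : ℝ => (φ^2 - 1/4)/2 * x - φ*κ/6 * x ^ 3 + κ^2/40 * x ^ 5)
      (f' := fun x : ℝ => (g x ^ 2 - 1/4) / 2) (a := -(1:ℝ)/2) (b := 1/2)
      (fun x _ => by
        have h := (((hasDerivAt_id x).const_mul ((φ^2 - 1/4)/2)).sub
          ((hasDerivAt_pow 3 x).const_mul (φ*κ/6))).add
          ((hasDerivAt_pow 5 x).const_mul (κ^2/40))
        convert h using 1
        rfl
        change ((φ - κ / 2 * x ^ 2) ^ 2 - 1/4) / 2 = _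
        norm_num
        ring)
      ((by fun_prop : Continuous fun x : ℝ => (g x ^ 2 - 1/4) / 2).intervalIntegrable _ _)
    rw [this]
    ring
  rw [c1, c2]
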